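/- Let X be a shift space, φ a one-block flip for (X, σ_X) with symbol map τ (writing a* = τ(a) for symbols and w* for the reversed block with τ applied letterwise), and N ≥ 1. Then the map φ^[N] : X^[N] → X^[N] defined by φ^[N](y)_i = (y_{−i})* is a one-block flip for the N-th higher block system (X^[N], σ_{X^[N]}); if N is odd, (X^[N], σ_{X^[N]}, φ^[N]) is conjugate to (X, σ_X, φ), and if N is even, it is conjugate to (X, σ_X, σ_X∘φ). -/

import Mathlib

/-!
Reading off the letter at position `0` of each `N`-block inverts `β_N`, and `β_N` intertwines
`φ^[N]` with `σ^{1-N} ∘ φ`, since reversing an `N`-block moves its first letter to position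
`N - 1`. Because `φ` reverses the shift, `σ^m` conjugates `σ^k ∘ φ` to `σ^{k+2m} ∘ φ`, so only
the parity of `1 - N` matters.
-/

open Set Function

/-- The map `x ↦ σᵐ(x)` on the full shift `A^ℤ`, where `σᵐ(x)_i = x_{i+m}`. -/
def shiftZ (A : Type*) (m : ℤ) : (ℤ → A) → ℤ → A := fun x i => x (i + m)

/-- The shift map `σ` on the full shift `A^ℤ`: `σ(x)_i = x_{i+1}`. -/
abbrev shiftMap (A : Type*) : (ℤ → A) → ℤ → A := shiftZ A 1

/-- The inverse shift map `σ⁻¹`: `σ⁻¹(x)_i = x_{i-1}`. -/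
abbrev shiftInv (A : Type*) : (ℤ → A) → ℤ → A := shiftZ A (-1)

/-- The reversal map `ρ`: `ρ(x)_i = x_{-i}`. -/
def revMap (A : Type*) : (ℤ → A) → ℤ → A := fun x i => x (-i)

/-- A shift space over `A`: a nonempty closed subset of `A^ℤ` with `σ(X) = X`. -/
def IsShiftSpace {A : Type*} [TopologicalSpace A] (X : Set (ℤ → A)) : Prop :=
  X.Nonempty ∧ IsClosed X ∧ shiftMap A '' X = X

/-- The word `w` occurs in `x` at position `i`, i.e. `x_{[i, i+|w|-1]} = w`. -/
def OccursAt {A : Type*} (w : List A) (x : ℤ → A) (i : ℤ) : Prop :=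
  ∀ k : Fin w.length, x (i + (k : ℕ)) = w.get k

/-- `w` is a block of `X`: it occurs in some point of `X`. -/
def IsBlockOf {A : Type*} (X : Set (ℤ → A)) (w : List A) : Prop :=
  ∃ x ∈ X, ∃ i : ℤ, OccursAt w x i

/-- `X` is irreducible: any two blocks can be joined by a block. -/
def ShiftIrreducible {A : Type*} (X : Set (ℤ → A)) : Prop :=
  ∀ u v : List A, IsBlockOf X u → IsBlockOf X v → ∃ w : List A, IsBlockOf X (u ++ w ++ v)

/-- `w` is a finitary (intrinsically synchronizing) block of `X`. -/
def IsFinitary {A : Type*} (X : Set (ℤ → A)) (w : List A) : Prop :=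
  IsBlockOf X w ∧ ∀ u v : List A, IsBlockOf X (u ++ w) → IsBlockOf X (w ++ v) →
    IsBlockOf X (u ++ w ++ v)

/-- A synchronized system: an irreducible shift space with a finitary block. -/
def IsSynchronized {A : Type*} [TopologicalSpace A] (X : Set (ℤ → A)) : Prop :=
  IsShiftSpace X ∧ ShiftIrreducible X ∧ ∃ w : List A, IsFinitary X w

/-- `φ` (as a map of the ambient full shift) restricts to a flip for `(X, σ_X)`:
a homeomorphism `X → X` with `φ ∘ φ = id` and `φ ∘ σ_X = σ_X⁻¹ ∘ φ`.
(Being a homeomorphism is automatic from continuity and `φ ∘ φ = id` on `X`.) -/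
def IsFlip {A : Type*} [TopologicalSpace A] (X : Set (ℤ → A))
    (φ : (ℤ → A) → ℤ → A) : Prop :=
  MapsTo φ X X ∧ ContinuousOn φ X ∧ (∀ x ∈ X, φ (φ x) = x) ∧
    ∀ x ∈ X, φ (shiftMap A x) = shiftInv A (φ x)

/-- The shift-flip systems `(X, σ_X, φ)` and `(Y, σ_Y, ψ)` are conjugate:
there is a homeomorphism `Φ : X → Y` with `Φ ∘ σ_X = σ_Y ∘ Φ` and `Φ ∘ φ = ψ ∘ Φ`. -/
def SystemConj {A B : Type*} [TopologicalSpace A] [TopologicalSpace B]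
    (X : Set (ℤ → A)) (φ : (ℤ → A) → ℤ → A)
    (Y : Set (ℤ → B)) (ψ : (ℤ → B) → ℤ → B) : Prop :=
  ∃ (Φ : (ℤ → A) → ℤ → B) (Ψ : (ℤ → B) → ℤ → A),
    MapsTo Φ X Y ∧ ContinuousOn Φ X ∧ MapsTo Ψ Y X ∧ ContinuousOn Ψ Y ∧
    InvOn Ψ Φ X Y ∧
    (∀ x ∈ X, Φ (shiftMap A x) = shiftMap B (Φ x)) ∧ ∀ x ∈ X, Φ (φ x) = ψ (Φ x)

/-- Two flips `φ, φ'` for `(X, σ_X)` are conjugate. -/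
def FlipConj {A : Type*} [TopologicalSpace A] (X : Set (ℤ → A))
    (φ φ' : (ℤ → A) → ℤ → A) : Prop :=
  SystemConj X φ X φ'

/-- `F(φ; n) = {x ∈ X : σ_X^n(x) = x and φ(x) = x}`. -/
def flipFix {A : Type*} (X : Set (ℤ → A)) (φ : (ℤ → A) → ℤ → A) (n : ℕ) :
    Set (ℤ → A) :=
  {x ∈ X | (shiftMap A)^[n] x = x ∧ φ x = x}

/-- `A(φ)`: points of `X` in which some finitary block occurs infinitely often and
which differ from their `φ`-image in at least one but only finitely many coordinates. -/
def flipAsym {A : Type*} (X : Set (ℤ → A)) (φ : (ℤ → A) → ℤ → A) :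
    Set (ℤ → A) :=
  {x ∈ X | (∃ w : List A, IsFinitary X w ∧ {i : ℤ | OccursAt w x i}.Infinite) ∧
    {i : ℤ | φ x i ≠ x i}.Nonempty ∧ {i : ℤ | φ x i ≠ x i}.Finite}

/-- `x` is a bi-infinite concatenation of words from `C`. -/
def IsConcat {A : Type*} (C : Set (List A)) (x : ℤ → A) : Prop :=
  ∃ t : ℤ → ℤ, StrictMono t ∧ (∀ n : ℤ, ∃ j : ℤ, t j ≤ n ∧ n < t (j + 1)) ∧
    ∀ j : ℤ, ∃ w ∈ C, t (j + 1) = t j + w.length ∧ OccursAt w x (t j)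

/-- A coded system: a shift space in which the set of bi-infinite concatenations of
words from some code `C` is dense. -/
def IsCoded {A : Type*} [TopologicalSpace A] (X : Set (ℤ → A)) : Prop :=
  IsShiftSpace X ∧ ∃ C : Set (List A), closure {x | IsConcat C x} = X

/-- The map `β_N` onto the `N`-th higher block presentation: `β_N(x)_i = x_{[i, i+N-1]}`. -/
def betaN (A : Type*) (N : ℕ) : (ℤ → A) → ℤ → (Fin N → A) :=
  fun x i k => x (i + (k : ℕ))

/-- The `*`-operation on `N`-blocks: reverse the block and apply `τ` letterwise. -/
def starBlock {A : Type*} (τ : A → A) (N : ℕ) (u : Fin N → A) : Fin N → A :=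
  fun k => τ (u k.rev)

/-- The map `φ^[N]` on the `N`-th higher block system: `φ^[N](y)_i = (y_{-i})*`. -/
def flipN {A : Type*} (τ : A → A) (N : ℕ) :
    (ℤ → (Fin N → A)) → ℤ → (Fin N → A) :=
  fun y i => starBlock τ N (y (-i))

section Shift

variable {A : Type*}

lemma shiftZ_zero (x : ℤ → A) : shiftZ A 0 x = x := by
  funext i
  simp [shiftZ]

lemma shiftZ_shiftZ (m n : ℤ) (x : ℤ → A) :
    shiftZ A m (shiftZ A n x) = shiftZ A (n + m) x := by
  funext i
  simp only [shiftZ, add_assoc, add_comm m n]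

lemma continuous_shiftZ [TopologicalSpace A] (m : ℤ) : Continuous (shiftZ A m) :=
  continuous_pi fun i => continuous_apply (i + m)

lemma mapsTo_shiftZ {X : Set (ℤ → A)} (hX : shiftMap A '' X = X) (m : ℤ) :
    MapsTo (shiftZ A m) X X := by
  induction m using Int.induction_on with
  | zero => intro x hx; rwa [shiftZ_zero]
  | succ k ih =>
    intro x hx
    rw [← shiftZ_shiftZ, ← hX]
    exact mem_image_of_mem _ (ih hx)
  | pred k ih =>
    intro x hx
    obtain ⟨z, hz, hzx⟩ : shiftZ A (-k) x ∈ shiftMap A '' X := by rw [hX]; exact ih hx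
    have : z = shiftZ A (-1) (shiftZ A (-k) x) := by
      rw [← hzx, shiftZ_shiftZ, add_neg_cancel, shiftZ_zero]
    rwa [this, shiftZ_shiftZ] at hz

lemma revMap_shiftZ (m : ℤ) (x : ℤ → A) :
    revMap A (shiftZ A m x) = shiftZ A (-m) (revMap A x) := by
  funext i
  simp only [revMap, shiftZ, neg_add, neg_neg]

end Shift

section HigherBlock

variable {A : Type*} {N : ℕ}

lemma continuous_betaN [TopologicalSpace A] : Continuous (betaN A N) :=
  continuous_pi fun i => continuous_pi fun k => continuous_apply (i + (k : ℕ))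

lemma betaN_shiftMap (x : ℤ → A) :
    betaN A N (shiftMap A x) = shiftMap (Fin N → A) (betaN A N x) := by
  funext i k
  simp only [betaN, shiftZ, add_right_comm]

lemma flipN_betaN (τ : A → A) (x : ℤ → A) :
    flipN τ N (betaN A N x) = betaN A N (shiftZ A (1 - N) (τ ∘ revMap A x)) := by
  funext i k
  simp only [flipN, starBlock, betaN, shiftZ, revMap, comp_apply, Fin.val_rev]
  congr 2
  omega

lemma flipN_flipN (τ : A → A) {y : ℤ → Fin N → A} (hy : ∀ i k, τ (τ (y i k)) = y i k) :
    flipN τ N (flipN τ N y) = y := by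
  funext i k
  simp only [flipN, starBlock, neg_neg, Fin.rev_rev, hy]

lemma flipN_shiftMap (τ : A → A) (y : ℤ → Fin N → A) :
    flipN τ N (shiftMap _ y) = shiftInv _ (flipN τ N y) := by
  funext i
  simp only [flipN, shiftZ, neg_add, neg_neg]

lemma continuous_flipN [TopologicalSpace A] {τ : A → A} (hτ : Continuous τ) :
    Continuous (flipN τ N) :=
  continuous_pi fun i => continuous_pi fun k =>
    hτ.comp ((continuous_apply k.rev).comp (continuous_apply (-i)))

end HigherBlock

section Conjugacy

variable {A B C : Type*} [TopologicalSpace A] [TopologicalSpace B] [TopologicalSpace C]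

lemma SystemConj.trans {X : Set (ℤ → A)} {Y : Set (ℤ → B)} {Z : Set (ℤ → C)}
    {φ : (ℤ → A) → ℤ → A} {ψ : (ℤ → B) → ℤ → B} {χ : (ℤ → C) → ℤ → C}
    (h₁ : SystemConj X φ Y ψ) (h₂ : SystemConj Y ψ Z χ) : SystemConj X φ Z χ := by
  obtain ⟨Φ₁, Ψ₁, hΦ₁, hΦ₁c, hΨ₁, hΨ₁c, hinv₁, hσ₁, hφ₁⟩ := h₁
  obtain ⟨Φ₂, Ψ₂, hΦ₂, hΦ₂c, hΨ₂, hΨ₂c, hinv₂, hσ₂, hφ₂⟩ := h₂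
  refine ⟨Φ₂ ∘ Φ₁, Ψ₁ ∘ Ψ₂, hΦ₂.comp hΦ₁, hΦ₂c.comp hΦ₁c hΦ₁, hΨ₁.comp hΨ₂,
    hΨ₁c.comp hΨ₂c hΨ₂, hinv₁.comp hinv₂ hΦ₁ hΨ₂, fun x hx => ?_, fun x hx => ?_⟩
  · simp only [comp_apply, hσ₁ x hx, hσ₂ _ (hΦ₁ hx)]
  · simp only [comp_apply, hφ₁ x hx, hφ₂ _ (hΦ₁ hx)]

lemma systemConj_betaN_image {X : Set (ℤ → A)} {N : ℕ} (hN : 1 ≤ N)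
    {φ : (ℤ → A) → ℤ → A} {ψ : (ℤ → Fin N → A) → ℤ → Fin N → A}
    (hψ : ∀ x ∈ X, ψ (betaN A N x) = betaN A N (φ x)) :
    SystemConj (betaN A N '' X) ψ X φ := by
  let first : (ℤ → Fin N → A) → ℤ → A := fun y i => y i ⟨0, hN⟩
  have first_betaN (x : ℤ → A) : first (betaN A N x) = x := by
    funext i
    simp [first, betaN]
  refine ⟨first, betaN A N, ?_, ?_, mapsTo_image _ _, continuous_betaN.continuousOn,
    ⟨fun y ⟨x, _, hxy⟩ => ?_, fun x _ => first_betaN x⟩, ?_, ?_⟩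
  · rintro _ ⟨x, hx, rfl⟩
    rwa [first_betaN]
  · exact (continuous_pi fun i => (continuous_apply _).comp (continuous_apply i)).continuousOn
  · rw [← hxy, first_betaN]
  · rintro _ ⟨x, -, rfl⟩
    rw [← betaN_shiftMap, first_betaN, first_betaN]
  · rintro _ ⟨x, hx, rfl⟩
    rw [hψ x hx, first_betaN, first_betaN]

lemma systemConj_shiftZ_comp {X : Set (ℤ → A)} (hX : shiftMap A '' X = X)
    {φ : (ℤ → A) → ℤ → A} (hφ : ∀ m, ∀ x ∈ X, φ (shiftZ A m x) = shiftZ A (-m) (φ x))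
    {k k' : ℤ} (m : ℤ) (hk : k' = k + 2 * m) :
    SystemConj X (shiftZ A k ∘ φ) X (shiftZ A k' ∘ φ) := by
  refine ⟨shiftZ A m, shiftZ A (-m), mapsTo_shiftZ hX m, (continuous_shiftZ m).continuousOn,
    mapsTo_shiftZ hX (-m), (continuous_shiftZ _).continuousOn,
    ⟨fun x _ => ?_, fun x _ => ?_⟩, fun x _ => ?_, fun x hx => ?_⟩
  · rw [shiftZ_shiftZ, add_neg_cancel, shiftZ_zero]
  · rw [shiftZ_shiftZ, neg_add_cancel, shiftZ_zero]
  · rw [shiftZ_shiftZ, add_comm]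
    exact (shiftZ_shiftZ 1 m x).symm
  · simp only [comp_apply, hφ m x hx, shiftZ_shiftZ, hk]
    ring_nf

end Conjugacy

theorem higher_block_flip_general
    {A : Type*} [TopologicalSpace A] [DiscreteTopology A]
    (X : Set (ℤ → A)) (hX : IsShiftSpace X)
    (φ : (ℤ → A) → ℤ → A) (hφ : IsFlip X φ)
    (τ : A → A) (hτ : ∀ x ∈ X, ∀ i : ℤ, φ x i = τ (x (-i)))
    (N : ℕ) (hN : 1 ≤ N) :
    IsFlip (betaN A N '' X) (flipN τ N) ∧
    (∀ y ∈ betaN A N '' X, ∀ i : ℤ, flipN τ N y i = starBlock τ N (y (-i))) ∧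
    (Odd N → SystemConj (betaN A N '' X) (flipN τ N) X φ) ∧
    (Even N → SystemConj (betaN A N '' X) (flipN τ N) X (shiftMap A ∘ φ)) := by
  have hσX : shiftMap A '' X = X := hX.2.2
  have hφτ : ∀ x ∈ X, φ x = τ ∘ revMap A x := fun x hx => funext (hτ x hx)
  have hττ : ∀ x ∈ X, ∀ i, τ (τ (x i)) = x i := fun x hx i => by
    simpa [hτ _ (hφ.1 hx), hτ x hx] using congrFun (hφ.2.2.1 x hx) i
  have hβ : ∀ x ∈ X, flipN τ N (betaN A N x) = betaN A N (shiftZ A (1 - N) (φ x)) :=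
    fun x hx => by rw [hφτ x hx, flipN_betaN]
  have hφσ : ∀ m, ∀ x ∈ X, φ (shiftZ A m x) = shiftZ A (-m) (φ x) := fun m x hx => by
    rw [hφτ x hx, hφτ _ (mapsTo_shiftZ hσX m hx), revMap_shiftZ]
    rfl
  have hconj : ∀ k m : ℤ, k = 1 - N + 2 * m →
      SystemConj (betaN A N '' X) (flipN τ N) X (shiftZ A k ∘ φ) := fun k m hk =>
    (systemConj_betaN_image hN hβ).trans (systemConj_shiftZ_comp hσX hφσ m hk)
  refine ⟨⟨?_, (continuous_flipN continuous_of_discreteTopology).continuousOn, ?_,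
    fun y _ => flipN_shiftMap τ y⟩, fun _ _ _ => rfl, ?_, ?_⟩
  · rintro _ ⟨x, hx, rfl⟩
    rw [hβ x hx]
    exact mem_image_of_mem _ (mapsTo_shiftZ hσX _ (hφ.1 hx))
  · rintro _ ⟨x, hx, rfl⟩
    exact flipN_flipN τ fun i k => hττ x hx _
  · rintro ⟨t, rfl⟩
    simpa [comp_def, shiftZ_zero] using hconj 0 t (by push_cast; ring)
  · rintro ⟨t, rfl⟩
    exact hconj 1 t (by push_cast; ring)

/-- Let `φ` be a one-block flip for `(X, σ_X)` with symbol map `τ` and let `N ≥ 1`.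
Then `φ^[N]` is a one-block flip for the `N`-th higher block system
`(X^[N], σ_{X^[N]})`; if `N` is odd, `(X^[N], σ_{X^[N]}, φ^[N])` is conjugate to
`(X, σ_X, φ)`, and if `N` is even, it is conjugate to `(X, σ_X, σ_X ∘ φ)`. -/
theorem higher_block_flip
    {A : Type*} [Fintype A] [TopologicalSpace A] [DiscreteTopology A]
    (X : Set (ℤ → A)) (hX : IsShiftSpace X)
    (φ : (ℤ → A) → ℤ → A) (hφ : IsFlip X φ)
    (τ : A → A) (hτ : ∀ x ∈ X, ∀ i : ℤ, φ x i = τ (x (-i)))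
    (N : ℕ) (hN : 1 ≤ N) :
    IsFlip (betaN A N '' X) (flipN τ N) ∧
    (∀ y ∈ betaN A N '' X, ∀ i : ℤ, flipN τ N y i = starBlock τ N (y (-i))) ∧
    (Odd N → SystemConj (betaN A N '' X) (flipN τ N) X φ) ∧
    (Even N → SystemConj (betaN A N '' X) (flipN τ N) X (shiftMap A ∘ φ)) :=
  higher_block_flip_general X hX φ hφ τ hτ N hN
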